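/- arXiv:2204.12878 — 2 statements merged into one kernel-verified Lean document; each statement's English description precedes it below -/
import Mathlib

section
/- Let x : I × [0,T] → ℝ² be a smooth normal parameterization solving x_tt + β x_t = (1/|x_ρ|)(x_ρ/|x_ρ|)_ρ − (x_t·τ_t)τ. Then the energy satisfies (1/2) d/dt ∫_I (|x_t|² + 2)|x_ρ| dρ = −(1/2)∫_I (x_t·ν)³ κ |x_ρ| dρ − β ∫_I (x_t·ν)² |x_ρ| dρ. -/
open scoped RealInnerProductSpace
open Set MeasureTheory

noncomputable section

abbrev E2 := EuclideanSpace ℝ (Fin 2)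

/-- Clockwise rotation through π/2. -/
def rot (v : E2) : E2 := (WithLp.equiv 2 (Fin 2 → ℝ)).symm ![v 1, -v 0]

lemma rot_apply0 (v : E2) : rot v 0 = v 1 := rfl
lemma rot_apply1 (v : E2) : rot v 1 = -v 0 := rfl

lemma inner_E2 (v w : E2) : ⟪v, w⟫ = v 0 * w 0 + v 1 * w 1 := by
  simp [PiLp.inner_apply, RCLike.inner_apply, Fin.sum_univ_two]; ring

lemma normsq_E2 (v : E2) : ‖v‖ ^ 2 = v 0 ^ 2 + v 1 ^ 2 := by
  rw [← real_inner_self_eq_norm_sq, inner_E2]; ring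

lemma pyth (u w : E2) (hu : ‖u‖ = 1) :
    ⟪w, u⟫ ^ 2 + ⟪w, rot u⟫ ^ 2 = ‖w‖ ^ 2 := by
  have h : u 0 ^ 2 + u 1 ^ 2 = 1 := by rw [← normsq_E2, hu]; norm_num
  rw [normsq_E2, inner_E2, inner_E2, rot_apply0, rot_apply1]
  ring_nf
  nlinarith [h]

lemma rot_inner_self (v : E2) : ⟪rot v, rot v⟫ = ⟪v, v⟫ := by
  rw [inner_E2, inner_E2, rot_apply0, rot_apply1]; ring

lemma continuous_rot : Continuous rot := by
  have h1 : Continuous fun v : E2 => (![v 1, -v 0] : Fin 2 → ℝ) := by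
    apply continuous_pi
    intro i
    fin_cases i
    · exact continuous_apply (1 : Fin 2) |>.comp (PiLp.continuous_ofLp 2 _)
    · exact (continuous_apply (0 : Fin 2) |>.comp (PiLp.continuous_ofLp 2 _)).neg
  exact (PiLp.continuous_toLp 2 (fun _ : Fin 2 => ℝ)).comp h1

def Dx (x : ℝ → ℝ → E2) : ℝ × ℝ → (ℝ × ℝ) →L[ℝ] E2 :=
  fderiv ℝ (fun p : ℝ × ℝ => x p.1 p.2)

def D2x (x : ℝ → ℝ → E2) : ℝ × ℝ → (ℝ × ℝ) →L[ℝ] (ℝ × ℝ) →L[ℝ] E2 :=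
  fderiv ℝ (Dx x)

section DerivLemmas

variable {x : ℝ → ℝ → E2} (hs : ContDiff ℝ (⊤ : ℕ∞) (fun p : ℝ × ℝ => x p.1 p.2))

lemma line_ρ (ρ t : ℝ) : HasDerivAt (fun ρ' : ℝ => ((ρ', t) : ℝ × ℝ)) (1, 0) ρ :=
  (hasDerivAt_id ρ).prodMk (hasDerivAt_const ρ t)

lemma line_t (ρ t : ℝ) : HasDerivAt (fun t' : ℝ => ((ρ, t') : ℝ × ℝ)) (0, 1) t :=
  (hasDerivAt_const t ρ).prodMk (hasDerivAt_id t)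

include hs

lemma slice_ρ (ρ t : ℝ) : HasDerivAt (fun ρ' => x ρ' t) (Dx x (ρ, t) (1, 0)) ρ := by
  have := ((hs.differentiable (by simp)) (ρ, t)).hasFDerivAt.comp_hasDerivAt ρ (line_ρ ρ t)
  simpa [Function.comp_def, Dx] using this

lemma slice_t (ρ t : ℝ) : HasDerivAt (fun t' => x ρ t') (Dx x (ρ, t) (0, 1)) t := by
  have := ((hs.differentiable (by simp)) (ρ, t)).hasFDerivAt.comp_hasDerivAt t (line_t ρ t)
  simpa [Function.comp_def, Dx] using this

lemma contDx : Continuous (Dx x) := (hs.fderiv_right (m := (⊤ : ℕ∞)) (by simp)).continuous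

lemma contD2x : Continuous (D2x x) :=
  (hs.fderiv_right (m := (⊤ : ℕ∞)) (by simp)).continuous_fderiv (by simp)

lemma Dslice_t (ρ t : ℝ) (v : ℝ × ℝ) :
    HasDerivAt (fun t' => Dx x (ρ, t') v) (D2x x (ρ, t) (0, 1) v) t := by
  have hD : Differentiable ℝ (Dx x) :=
    (hs.fderiv_right (m := (⊤ : ℕ∞)) (by simp)).differentiable (by simp)
  have h2 : HasDerivAt (fun t' => Dx x (ρ, t')) (D2x x (ρ, t) (0, 1)) t := by
    have := (hD (ρ, t)).hasFDerivAt.comp_hasDerivAt t (line_t ρ t)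
    simpa [Function.comp_def, D2x] using this
  simpa using h2.clm_apply (hasDerivAt_const t v)

lemma Dslice_ρ (ρ t : ℝ) (v : ℝ × ℝ) :
    HasDerivAt (fun ρ' => Dx x (ρ', t) v) (D2x x (ρ, t) (1, 0) v) ρ := by
  have hD : Differentiable ℝ (Dx x) :=
    (hs.fderiv_right (m := (⊤ : ℕ∞)) (by simp)).differentiable (by simp)
  have h2 : HasDerivAt (fun ρ' => Dx x (ρ', t)) (D2x x (ρ, t) (1, 0)) ρ := by
    have := (hD (ρ, t)).hasFDerivAt.comp_hasDerivAt ρ (line_ρ ρ t)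
    simpa [Function.comp_def, D2x] using this
  simpa using h2.clm_apply (hasDerivAt_const ρ v)

lemma D2symm (p : ℝ × ℝ) (v w : ℝ × ℝ) : D2x x p v w = D2x x p w v :=
  (hs.contDiffAt.isSymmSndFDerivAt (by rw [minSmoothness_of_isRCLikeNormedField]; exact WithTop.coe_le_coe.mpr (le_top : (2 : ℕ∞) ≤ ⊤))) v w

end DerivLemmas

/-- energy law for the hyperbolic curvature flow:
`(1/2) d/dt ∫_I (|x_t|²+2)|x_ρ| dρ
   = −(1/2)∫_I (x_t·ν)³ κ |x_ρ| dρ − β∫_I (x_t·ν)² |x_ρ| dρ`. -/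
theorem energy_law
    (T β : ℝ) (hT : 0 < T) (hβ : 0 ≤ β)
    (x xρ xt xtt τ τt τρ ν : ℝ → ℝ → E2) (κ : ℝ → ℝ → ℝ)
    (hsmooth : ContDiff ℝ (⊤ : ℕ∞) (fun p : ℝ × ℝ => x p.1 p.2))
    (hper : ∀ ρ t, x (ρ + 1) t = x ρ t)
    (hxρ : ∀ ρ t, HasDerivAt (fun ρ' => x ρ' t) (xρ ρ t) ρ)
    (hxt : ∀ ρ t, HasDerivAt (fun t' => x ρ t') (xt ρ t) t)
    (hxtt : ∀ ρ t, HasDerivAt (fun t' => xt ρ t') (xtt ρ t) t)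
    (hpos : ∀ ρ t, 0 < ‖xρ ρ t‖)
    (hτ : ∀ ρ t, τ ρ t = ‖xρ ρ t‖⁻¹ • xρ ρ t)
    (hν : ∀ ρ t, ν ρ t = rot (τ ρ t))
    (hτt : ∀ ρ t, HasDerivAt (fun t' => τ ρ t') (τt ρ t) t)
    (hτρ : ∀ ρ t, HasDerivAt (fun ρ' => τ ρ' t) (τρ ρ t) ρ)
    (hκ : ∀ ρ t, τρ ρ t = (‖xρ ρ t‖ * κ ρ t) • ν ρ t)
    (hnormal : ∀ ρ, ∀ t ∈ Icc (0:ℝ) T, ⟪xt ρ t, τ ρ t⟫ = 0)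
    (hpde : ∀ ρ, ∀ t ∈ Icc (0:ℝ) T,
      xtt ρ t + β • xt ρ t
        = ‖xρ ρ t‖⁻¹ • τρ ρ t - ⟪xt ρ t, τt ρ t⟫ • τ ρ t) :
    ∀ t ∈ Icc (0:ℝ) T,
      HasDerivAt
        (fun t' => (1/2) * ∫ ρ in (0:ℝ)..1, (‖xt ρ t'‖ ^ 2 + 2) * ‖xρ ρ t'‖)
        (-((1/2) * ∫ ρ in (0:ℝ)..1, ⟪xt ρ t, ν ρ t⟫ ^ 3 * κ ρ t * ‖xρ ρ t‖)
          - β * ∫ ρ in (0:ℝ)..1, ⟪xt ρ t, ν ρ t⟫ ^ 2 * ‖xρ ρ t‖) t := by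
  intro t ht
  obtain ⟨ht0, htT⟩ := ht
  -- identifications of the given derivatives with fderiv data
  have hxρ_eq : ∀ ρ' t', xρ ρ' t' = Dx x (ρ', t') (1, 0) :=
    fun ρ' t' => (hxρ ρ' t').unique (slice_ρ hsmooth ρ' t')
  have hxt_eq : ∀ ρ' t', xt ρ' t' = Dx x (ρ', t') (0, 1) :=
    fun ρ' t' => (hxt ρ' t').unique (slice_t hsmooth ρ' t')
  set w : ℝ → ℝ → E2 := fun ρ' t' => D2x x (ρ', t') (0, 1) (1, 0) with hw
  have hxρ_t : ∀ ρ' t', HasDerivAt (fun s => xρ ρ' s) (w ρ' t') t' := by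
    intro ρ' t'
    have he : (fun s => xρ ρ' s) = fun s => Dx x (ρ', s) (1, 0) :=
      funext fun s => hxρ_eq ρ' s
    rw [he]; exact Dslice_t hsmooth ρ' t' (1, 0)
  have hxt_ρ : ∀ ρ' t', HasDerivAt (fun r => xt r t') (w ρ' t') ρ' := by
    intro ρ' t'
    have he : (fun r => xt r t') = fun r => Dx x (r, t') (0, 1) :=
      funext fun r => hxt_eq r t'
    rw [he]
    show HasDerivAt _ (D2x x (ρ', t') (0, 1) (1, 0)) ρ'
    rw [D2symm hsmooth (ρ', t') (0, 1) (1, 0)]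
    exact Dslice_ρ hsmooth ρ' t' (0, 1)
  have hxtt_eq : ∀ ρ' t', xtt ρ' t' = D2x x (ρ', t') (0, 1) (0, 1) := by
    intro ρ' t'
    refine (hxtt ρ' t').unique ?_
    have he : (fun s => xt ρ' s) = fun s => Dx x (ρ', s) (0, 1) :=
      funext fun s => hxt_eq ρ' s
    rw [he]; exact Dslice_t hsmooth ρ' t' (0, 1)
  -- time derivative of the norm of xρ
  have hnorm_t : ∀ ρ' t', HasDerivAt (fun s => ‖xρ ρ' s‖)
      (⟪xρ ρ' t', w ρ' t'⟫ / ‖xρ ρ' t'‖) t' := by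
    intro ρ' t'
    have hii : HasDerivAt (fun s => ⟪xρ ρ' s, xρ ρ' s⟫)
        (⟪xρ ρ' t', w ρ' t'⟫ + ⟪w ρ' t', xρ ρ' t'⟫) t' :=
      (hxρ_t ρ' t').inner ℝ (hxρ_t ρ' t')
    have hne : ⟪xρ ρ' t', xρ ρ' t'⟫ ≠ 0 := by
      rw [real_inner_self_eq_norm_sq]
      have := hpos ρ' t'; positivity
    have hsq := hii.sqrt hne
    have he : (fun s => Real.sqrt ⟪xρ ρ' s, xρ ρ' s⟫) = fun s => ‖xρ ρ' s‖ := by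
      funext s; rw [real_inner_self_eq_norm_sq, Real.sqrt_sq (norm_nonneg _)]
    rw [he] at hsq
    convert hsq using 1
    rw [real_inner_self_eq_norm_sq, Real.sqrt_sq (norm_nonneg _),
      real_inner_comm (w ρ' t')]
    have hr : ‖xρ ρ' t'‖ ≠ 0 := (hpos ρ' t').ne'
    field_simp
    ring
  -- the time derivative of the energy density
  set F' : ℝ → ℝ → ℝ := fun t' ρ' =>
    2 * ⟪xt ρ' t', xtt ρ' t'⟫ * ‖xρ ρ' t'‖
      + (‖xt ρ' t'‖ ^ 2 + 2) * (⟪xρ ρ' t', w ρ' t'⟫ / ‖xρ ρ' t'‖) with hF'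
  have hF'deriv : ∀ ρ' t',
      HasDerivAt (fun s => (‖xt ρ' s‖ ^ 2 + 2) * ‖xρ ρ' s‖) (F' t' ρ') t' := by
    intro ρ' t'
    have h1 : HasDerivAt (fun s => ‖xt ρ' s‖ ^ 2 + 2)
        (2 * ⟪xt ρ' t', xtt ρ' t'⟫) t' := by
      have hii : HasDerivAt (fun s => ⟪xt ρ' s, xt ρ' s⟫)
          (⟪xt ρ' t', xtt ρ' t'⟫ + ⟪xtt ρ' t', xt ρ' t'⟫) t' :=
        (hxtt ρ' t').inner ℝ (hxtt ρ' t')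
      have he : (fun s => ‖xt ρ' s‖ ^ 2 + 2) = fun s => ⟪xt ρ' s, xt ρ' s⟫ + 2 := by
        funext s; rw [real_inner_self_eq_norm_sq]
      rw [he]
      refine (hii.add_const 2).congr_deriv ?_
      rw [real_inner_comm (xtt ρ' t')]; ring
    rw [hF']
    exact h1.mul (hnorm_t ρ' t')
  -- joint continuity
  have cj_xρ : Continuous (fun q : ℝ × ℝ => xρ q.2 q.1) := by
    have he : (fun q : ℝ × ℝ => xρ q.2 q.1)
        = fun q : ℝ × ℝ => Dx x (q.2, q.1) (1, 0) :=
      funext fun q => hxρ_eq q.2 q.1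
    rw [he]
    exact ((contDx hsmooth).comp (continuous_snd.prodMk continuous_fst)).clm_apply
      continuous_const
  have cj_xt : Continuous (fun q : ℝ × ℝ => xt q.2 q.1) := by
    have he : (fun q : ℝ × ℝ => xt q.2 q.1)
        = fun q : ℝ × ℝ => Dx x (q.2, q.1) (0, 1) :=
      funext fun q => hxt_eq q.2 q.1
    rw [he]
    exact ((contDx hsmooth).comp (continuous_snd.prodMk continuous_fst)).clm_apply
      continuous_const
  have cj_xtt : Continuous (fun q : ℝ × ℝ => xtt q.2 q.1) := by
    have he : (fun q : ℝ × ℝ => xtt q.2 q.1)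
        = fun q : ℝ × ℝ => D2x x (q.2, q.1) (0, 1) (0, 1) :=
      funext fun q => hxtt_eq q.2 q.1
    rw [he]
    exact (((contD2x hsmooth).comp (continuous_snd.prodMk continuous_fst)).clm_apply
      continuous_const).clm_apply continuous_const
  have cj_w : Continuous (fun q : ℝ × ℝ => w q.2 q.1) := by
    rw [hw]
    exact (((contD2x hsmooth).comp (continuous_snd.prodMk continuous_fst)).clm_apply
      continuous_const).clm_apply continuous_const
  have cj_F' : Continuous fun q : ℝ × ℝ => F' q.1 q.2 := by
    rw [hF']
    refine Continuous.add ?_ ?_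
    · exact (continuous_const.mul (cj_xt.inner cj_xtt)).mul cj_xρ.norm
    · exact ((cj_xt.norm.pow 2).add continuous_const).mul
        ((cj_xρ.inner cj_w).div cj_xρ.norm fun q => (hpos q.2 q.1).ne')
  -- bound on a compact neighborhood
  obtain ⟨C, hC⟩ := (isCompact_Icc.prod isCompact_Icc :
      IsCompact (Icc (t - 1) (t + 1) ×ˢ Icc (0:ℝ) 1)).exists_bound_of_continuousOn
    cj_F'.continuousOn
  have cslice : ∀ (g : ℝ → ℝ → E2), Continuous (fun q : ℝ × ℝ => g q.2 q.1) →
      ∀ t', Continuous fun ρ' => g ρ' t' := by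
    intro g hg t'
    have he : (fun ρ' => g ρ' t')
        = (fun q : ℝ × ℝ => g q.2 q.1) ∘ fun ρ' => ((t', ρ') : ℝ × ℝ) := rfl
    rw [he]; exact hg.comp (continuous_const.prodMk continuous_id)
  have cρ_F : ∀ t', Continuous fun ρ' => (‖xt ρ' t'‖ ^ 2 + 2) * ‖xρ ρ' t'‖ := by
    intro t'
    exact (((cslice xt cj_xt t').norm.pow 2).add continuous_const).mul
      (cslice xρ cj_xρ t').norm
  have cρ_F' : Continuous fun ρ' => F' t ρ' := by
    have he : (fun ρ' => F' t ρ')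
        = (fun q : ℝ × ℝ => F' q.1 q.2) ∘ fun ρ' => ((t, ρ') : ℝ × ℝ) := rfl
    rw [he]; exact cj_F'.comp (continuous_const.prodMk continuous_id)
  -- differentiation under the integral sign
  have key := intervalIntegral.hasDerivAt_integral_of_dominated_loc_of_deriv_le
    (F := fun t' ρ' => (‖xt ρ' t'‖ ^ 2 + 2) * ‖xρ ρ' t'‖) (F' := F')
    (x₀ := t) (a := (0:ℝ)) (b := (1:ℝ)) (μ := volume) (bound := fun _ => C)
    (Metric.ball_mem_nhds t one_pos)
    (Filter.Eventually.of_forall fun t' => ((cρ_F t').aestronglyMeasurable))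
    ((cρ_F t).intervalIntegrable 0 1)
    cρ_F'.aestronglyMeasurable
    (Filter.Eventually.of_forall fun ρ' hρ' t' ht' => by
      have hmem : ((t', ρ') : ℝ × ℝ) ∈ Icc (t - 1) (t + 1) ×ˢ Icc (0:ℝ) 1 := by
        constructor
        · have hd := Metric.mem_ball.mp ht'
          rw [Real.dist_eq] at hd
          have h2 := abs_lt.mp hd
          exact ⟨by linarith [h2.1], by linarith [h2.2]⟩
        · have hio : ρ' ∈ Set.Ioc (0:ℝ) 1 := by
            rwa [Set.uIoc_of_le (by norm_num : (0:ℝ) ≤ 1)] at hρ'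
          exact ⟨hio.1.le, hio.2⟩
      exact hC (t', ρ') hmem)
    (intervalIntegrable_const)
    (Filter.Eventually.of_forall fun ρ' _ t' _ => hF'deriv ρ' t')
  have hder := key.2.const_mul (1/2 : ℝ)
  -- pointwise geometric identities at time t
  have hτu : ∀ ρ', ‖τ ρ' t‖ = 1 := by
    intro ρ'
    rw [hτ, norm_smul, norm_inv, norm_norm, inv_mul_cancel₀ (hpos ρ' t).ne']
  have hs2 : ∀ ρ', ‖xt ρ' t‖ ^ 2 = ⟪xt ρ' t, ν ρ' t⟫ ^ 2 := by
    intro ρ'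
    have hp := pyth (τ ρ' t) (xt ρ' t) (hτu ρ')
    rw [hnormal ρ' t ⟨ht0, htT⟩] at hp
    rw [hν]
    nlinarith [hp]
  have hinτρ : ∀ ρ', ⟪xt ρ' t, τρ ρ' t⟫
      = ‖xρ ρ' t‖ * (κ ρ' t * ⟪xt ρ' t, ν ρ' t⟫) := by
    intro ρ'
    rw [hκ, real_inner_smul_right]; ring
  have hxtxtt : ∀ ρ', ⟪xt ρ' t, xtt ρ' t⟫
      = κ ρ' t * ⟪xt ρ' t, ν ρ' t⟫ - β * ⟪xt ρ' t, ν ρ' t⟫ ^ 2 := by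
    intro ρ'
    have h := congrArg (fun v => ⟪xt ρ' t, v⟫) (hpde ρ' t ⟨ht0, htT⟩)
    simp only [inner_add_right, inner_sub_right, real_inner_smul_right] at h
    rw [hnormal ρ' t ⟨ht0, htT⟩, mul_zero, sub_zero, hinτρ ρ',
      inv_mul_cancel_left₀ (hpos ρ' t).ne', real_inner_self_eq_norm_sq, hs2 ρ'] at h
    linarith
  have hmix : ∀ ρ', ⟪xρ ρ' t, w ρ' t⟫
      = -(‖xρ ρ' t‖ ^ 2 * (κ ρ' t * ⟪xt ρ' t, ν ρ' t⟫)) := by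
    intro ρ'
    have hzero : HasDerivAt (fun r => ⟪xt r t, τ r t⟫) 0 ρ' := by
      have he : (fun r => ⟪xt r t, τ r t⟫) = fun _ => (0:ℝ) :=
        funext fun r => hnormal r t ⟨ht0, htT⟩
      rw [he]; exact hasDerivAt_const _ _
    have hd := (hxt_ρ ρ' t).inner ℝ (hτρ ρ' t)
    have h0 := hzero.unique hd
    have hwτ : ⟪w ρ' t, τ ρ' t⟫
        = -(‖xρ ρ' t‖ * (κ ρ' t * ⟪xt ρ' t, ν ρ' t⟫)) := by
      rw [hinτρ ρ'] at h0; linarith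
    have hxρτ : xρ ρ' t = ‖xρ ρ' t‖ • τ ρ' t := by
      rw [hτ, smul_smul, mul_inv_cancel₀ (hpos ρ' t).ne', one_smul]
    have hlhs : ⟪xρ ρ' t, w ρ' t⟫ = ‖xρ ρ' t‖ * ⟪w ρ' t, τ ρ' t⟫ := by
      conv_lhs => rw [hxρτ]
      rw [real_inner_smul_left, real_inner_comm]
    rw [hlhs, hwτ]; ring
  have hτρν : ∀ ρ', ⟪τρ ρ' t, ν ρ' t⟫ = ‖xρ ρ' t‖ * κ ρ' t := by
    intro ρ'
    rw [hκ, real_inner_smul_left]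
    have hνν : ⟪ν ρ' t, ν ρ' t⟫ = 1 := by
      rw [hν, rot_inner_self, real_inner_self_eq_norm_sq, hτu ρ']; norm_num
    rw [hνν, mul_one]
  have hFval : ∀ ρ', F' t ρ' =
      -(⟪xt ρ' t, ν ρ' t⟫ ^ 3 * ⟪τρ ρ' t, ν ρ' t⟫)
        - 2 * β * (⟪xt ρ' t, ν ρ' t⟫ ^ 2 * ‖xρ ρ' t‖) := by
    intro ρ'
    have hr : ‖xρ ρ' t‖ ≠ 0 := (hpos ρ' t).ne'
    rw [hF']
    simp only
    rw [hxtxtt ρ', hs2 ρ', hmix ρ', hτρν ρ']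
    field_simp
    ring
  -- continuity in ρ at time t of the target integrands
  have cxρt : Continuous fun ρ' => xρ ρ' t := cslice xρ cj_xρ t
  have cxtt' : Continuous fun ρ' => xt ρ' t := cslice xt cj_xt t
  have cτt : Continuous fun ρ' => τ ρ' t := by
    have he : (fun ρ' => τ ρ' t) = fun ρ' => ‖xρ ρ' t‖⁻¹ • xρ ρ' t :=
      funext fun ρ' => hτ ρ' t
    rw [he]
    exact (cxρt.norm.inv₀ fun ρ' => (hpos ρ' t).ne').smul cxρt
  have cνt : Continuous fun ρ' => ν ρ' t := by
    have he : (fun ρ' => ν ρ' t) = fun ρ' => rot (τ ρ' t) := funext fun ρ' => hν ρ' t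
    rw [he]; exact continuous_rot.comp cτt
  have cτρt : Continuous fun ρ' => τρ ρ' t := by
    have hc : ContDiff ℝ (⊤ : ℕ∞) fun ρ' : ℝ => Dx x (ρ', t) (1, 0) :=
      ((hsmooth.fderiv_right (m := (⊤ : ℕ∞)) (by simp)).comp
        (contDiff_id.prodMk contDiff_const)).clm_apply contDiff_const
    have hn0 : ∀ ρ' : ℝ, Dx x (ρ', t) (1, 0) ≠ 0 := by
      intro ρ'
      rw [← hxρ_eq]
      intro h
      exact absurd (by rw [h, norm_zero] : ‖xρ ρ' t‖ = 0) (hpos ρ' t).ne'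
    have hg : ContDiff ℝ (⊤ : ℕ∞) (fun ρ' => τ ρ' t) := by
      have he : (fun ρ' => τ ρ' t)
          = fun ρ' => ‖Dx x (ρ', t) (1, 0)‖⁻¹ • Dx x (ρ', t) (1, 0) := by
        funext ρ'; rw [hτ, hxρ_eq]
      rw [he]
      exact ((hc.norm ℝ hn0).inv fun ρ' => by
        simpa using (hn0 ρ' ∘ norm_eq_zero.mp)).smul hc
    have he : (fun ρ' => τρ ρ' t) = deriv (fun r => τ r t) :=
      funext fun ρ' => ((hτρ ρ' t).deriv).symm
    rw [he]
    exact hg.continuous_deriv (by simp)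
  have cA : Continuous fun ρ' => ⟪xt ρ' t, ν ρ' t⟫ ^ 3 * ⟪τρ ρ' t, ν ρ' t⟫ :=
    ((cxtt'.inner cνt).pow 3).mul (cτρt.inner cνt)
  have cB : Continuous fun ρ' => ⟪xt ρ' t, ν ρ' t⟫ ^ 2 * ‖xρ ρ' t‖ :=
    ((cxtt'.inner cνt).pow 2).mul cxρt.norm
  -- compute the value of the derivative
  have hint : (∫ ρ' in (0:ℝ)..1, F' t ρ')
      = -(∫ ρ' in (0:ℝ)..1, ⟪xt ρ' t, ν ρ' t⟫ ^ 3 * ⟪τρ ρ' t, ν ρ' t⟫)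
        - 2 * β * ∫ ρ' in (0:ℝ)..1, ⟪xt ρ' t, ν ρ' t⟫ ^ 2 * ‖xρ ρ' t‖ := by
    rw [intervalIntegral.integral_congr
      (g := fun ρ' => -(⟪xt ρ' t, ν ρ' t⟫ ^ 3 * ⟪τρ ρ' t, ν ρ' t⟫)
        - 2 * β * (⟪xt ρ' t, ν ρ' t⟫ ^ 2 * ‖xρ ρ' t‖)) (fun ρ' _ => hFval ρ')]
    rw [intervalIntegral.integral_sub (f := fun ρ' => -(⟪xt ρ' t, ν ρ' t⟫ ^ 3 * ⟪τρ ρ' t, ν ρ' t⟫)) (cA.neg.intervalIntegrable 0 1)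
      ((cB.intervalIntegrable 0 1).const_mul (2 * β))]
    rw [intervalIntegral.integral_neg, intervalIntegral.integral_const_mul]
  have hstA : (∫ ρ in (0:ℝ)..1, ⟪xt ρ t, ν ρ t⟫ ^ 3 * κ ρ t * ‖xρ ρ t‖)
      = ∫ ρ' in (0:ℝ)..1, ⟪xt ρ' t, ν ρ' t⟫ ^ 3 * ⟪τρ ρ' t, ν ρ' t⟫ := by
    refine intervalIntegral.integral_congr fun ρ' _ => ?_
    rw [hτρν ρ']; ring
  have hval : (1/2 : ℝ) * ∫ ρ' in (0:ℝ)..1, F' t ρ' =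
      -((1/2) * ∫ ρ in (0:ℝ)..1, ⟪xt ρ t, ν ρ t⟫ ^ 3 * κ ρ t * ‖xρ ρ t‖)
        - β * ∫ ρ in (0:ℝ)..1, ⟪xt ρ t, ν ρ t⟫ ^ 2 * ‖xρ ρ t‖ := by
    rw [hint, hstA]; ring
  rw [hval] at hder
  exact hder
end
end

section
/- Let x^h : 𝒢^h × [0,T_h) → ℝ² solve the semidiscrete scheme ẍ^h_j + β ẋ^h_j = (2/(q^h_j+q^h_{j+1}))(τ^h_{j+1}−τ^h_j)/h − (ẋ^h_j·θ̇^h_j)θ^h_j with initial velocity ẋ^h_j(0) = V₀(ρ_j) θ^{h,⊥}_j(0). Then ẋ^h_j · θ^h_j = 0 for all j and all t ∈ [0,T_h). -/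
/-!
Along a solution, `f(t) = ẋ_j · θ_j` satisfies `f' = ẍ_j · θ_j + ẋ_j · θ̇_j = -β f`. Indeed
`θ_j` is a unit vector, so the constraint force `-(ẋ_j · θ̇_j) θ_j` cancels the term `ẋ_j · θ̇_j`;
and the discrete curvature force is parallel to `τ_{j+1} - τ_j`, which is orthogonal to
`τ_j + τ_{j+1}` because both tangents are unit vectors. The initial velocity is normal, so
`f(0) = 0`, and hence `f = 0` for all times.
-/

open scoped RealInnerProductSpace
open Set

noncomputable section

lemma inner_rot_self (v : E2) : ⟪rot v, v⟫ = 0 := by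
  simp only [rot, PiLp.inner_apply, RCLike.inner_apply, starRingEnd_apply, star_trivial,
    Fin.sum_univ_two, WithLp.equiv_symm_apply, Matrix.cons_val_zero, Matrix.cons_val_one]
  ring

section InnerProductSpace

variable {E : Type*} [NormedAddCommGroup E] [InnerProductSpace ℝ E]

lemma inner_sub_smul_add_eq_zero_of_norm_eq {a b : E} (h : ‖a‖ = ‖b‖) (r : ℝ) :
    ⟪b - a, r • (a + b)⟫ = 0 := by
  rw [real_inner_smul_right, real_inner_comm, add_comm,
    (real_inner_add_sub_eq_zero_iff b a).2 h.symm, mul_zero]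

lemma hasDerivAt_inner_of_constraint_force {v θ : ℝ → E} {v' θ' a : E} {β t : ℝ}
    (hv : HasDerivAt v v' t) (hθ : HasDerivAt θ θ' t) (hθ_unit : ‖θ t‖ = 1)
    (ha : ⟪a, θ t⟫ = 0) (heq : v' + β • v t = a - ⟪v t, θ'⟫ • θ t) :
    HasDerivAt (fun s => ⟪v s, θ s⟫) (-β * ⟪v t, θ t⟫) t := by
  have hv' : v' = a - ⟪v t, θ'⟫ • θ t - β • v t := eq_sub_of_add_eq heq
  refine (hv.inner ℝ hθ).congr_deriv ?_
  rw [hv', inner_sub_left, inner_sub_left, real_inner_smul_left, real_inner_smul_left,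
    real_inner_self_eq_norm_sq, hθ_unit, ha]
  ring

end InnerProductSpace

lemma eq_zero_of_hasDerivAt_mul_self {f : ℝ → ℝ} {c a b : ℝ}
    (hf : ∀ s ∈ Ico a b, HasDerivAt f (c * f s) s) (ha : f a = 0) :
    ∀ t ∈ Ico a b, f t = 0 := by
  intro t ht
  set g : ℝ → ℝ := fun s => Real.exp (-c * s) * f s
  have hg : ∀ s ∈ Ico a b, HasDerivAt g 0 s := fun s hs =>
    (((hasDerivAt_id s).const_mul (-c)).exp.mul (hf s hs)).congr_deriv (by ring)
  have hsub : Icc a t ⊆ Ico a b := fun s hs => ⟨hs.1, hs.2.trans_lt ht.2⟩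
  have hg_const := constant_of_has_deriv_right_zero
    (fun s hs => (hg s (hsub hs)).continuousAt.continuousWithinAt)
    (fun s hs => (hg s (hsub (Ico_subset_Icc_self hs))).hasDerivWithinAt) t (right_mem_Icc.2 ht.1)
  simpa [g, ha, Real.exp_ne_zero] using hg_const

theorem semidiscrete_orthogonality_general
    (J : ℕ) (Th β : ℝ) (V₀ : ℝ → ℝ)
    (xh xhd xhdd τ θ θd : ℤ → ℝ → E2) (q : ℤ → ℝ → ℝ)
    (hq : ∀ j t, q j t = ‖(J:ℝ) • (xh j t - xh (j-1) t)‖)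
    (hqpos : ∀ j, ∀ t ∈ Ico (0:ℝ) Th, 0 < q j t)
    (hτ : ∀ j t, τ j t = (q j t)⁻¹ • ((J:ℝ) • (xh j t - xh (j-1) t)))
    (hθwell : ∀ j, ∀ t ∈ Ico (0:ℝ) Th, τ j t + τ (j+1) t ≠ 0)
    (hθ : ∀ j t, θ j t = ‖τ j t + τ (j+1) t‖⁻¹ • (τ j t + τ (j+1) t))
    (hxhdd : ∀ j t, HasDerivAt (fun t' => xhd j t') (xhdd j t) t)
    (hθd : ∀ j, ∀ t ∈ Ico (0:ℝ) Th, HasDerivAt (fun t' => θ j t') (θd j t) t)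
    (hscheme : ∀ j, ∀ t ∈ Ico (0:ℝ) Th,
      xhdd j t + β • xhd j t
        = (2 / (q j t + q (j+1) t)) • ((J:ℝ) • (τ (j+1) t - τ j t))
          - ⟪xhd j t, θd j t⟫ • θ j t)
    (hinit : ∀ j, xhd j 0 = V₀ (j * ((1:ℝ)/J)) • rot (θ j 0)) :
    ∀ j, ∀ t ∈ Ico (0:ℝ) Th, ⟪xhd j t, θ j t⟫ = 0 := by
  intro j
  have hτ_unit : ∀ k, ∀ s ∈ Ico (0:ℝ) Th, ‖τ k s‖ = 1 := fun k s hs => by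
    rw [hτ, hq]
    exact norm_smul_inv_norm (norm_pos_iff.mp (hq k s ▸ hqpos k s hs))
  have hθ_unit : ∀ s ∈ Ico (0:ℝ) Th, ‖θ j s‖ = 1 := fun s hs => by
    rw [hθ]
    exact norm_smul_inv_norm (hθwell j s hs)
  have hcurvature_tangential : ∀ s ∈ Ico (0:ℝ) Th,
      ⟪(2 / (q j s + q (j+1) s)) • ((J:ℝ) • (τ (j+1) s - τ j s)), θ j s⟫ = 0 := fun s hs => by
    rw [hθ, real_inner_smul_left, real_inner_smul_left,
      inner_sub_smul_add_eq_zero_of_norm_eq (by rw [hτ_unit j s hs, hτ_unit (j+1) s hs]),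
      mul_zero, mul_zero]
  refine eq_zero_of_hasDerivAt_mul_self (c := -β) (fun s hs => ?_) ?_
  · exact hasDerivAt_inner_of_constraint_force (hxhdd j s) (hθd j s hs) (hθ_unit s hs)
      (hcurvature_tangential s hs) (hscheme j s hs)
  · rw [hinit, real_inner_smul_left, inner_rot_self, mul_zero]

/-- for the semidiscrete scheme
`ẍ^h_j + β ẋ^h_j = (2/(q^h_j+q^h_{j+1}))(τ^h_{j+1}−τ^h_j)/h − (ẋ^h_j·θ̇^h_j)θ^h_j`
with initial velocity `ẋ^h_j(0) = V₀(ρ_j) θ^{h,⊥}_j(0)`, the discrete normal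
parameterization property `ẋ^h_j · θ^h_j = 0` holds for all `j` and `t ∈ [0,T_h)`. -/
theorem semidiscrete_orthogonality
    (J : ℕ) (hJ : 2 ≤ J) (Th β : ℝ) (hTh : 0 < Th) (hβ : 0 ≤ β) (V₀ : ℝ → ℝ)
    (xh xhd xhdd τ θ θd : ℤ → ℝ → E2) (q : ℤ → ℝ → ℝ)
    (hper : ∀ j t, xh (j + J) t = xh j t)
    (hq : ∀ j t, q j t = ‖(J:ℝ) • (xh j t - xh (j-1) t)‖)
    (hqpos : ∀ j, ∀ t ∈ Ico (0:ℝ) Th, 0 < q j t)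
    (hτ : ∀ j t, τ j t = (q j t)⁻¹ • ((J:ℝ) • (xh j t - xh (j-1) t)))
    (hθwell : ∀ j, ∀ t ∈ Ico (0:ℝ) Th, τ j t + τ (j+1) t ≠ 0)
    (hθ : ∀ j t, θ j t = ‖τ j t + τ (j+1) t‖⁻¹ • (τ j t + τ (j+1) t))
    (hxhd : ∀ j t, HasDerivAt (fun t' => xh j t') (xhd j t) t)
    (hxhdd : ∀ j t, HasDerivAt (fun t' => xhd j t') (xhdd j t) t)
    (hθd : ∀ j, ∀ t ∈ Ico (0:ℝ) Th, HasDerivAt (fun t' => θ j t') (θd j t) t)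
    (hscheme : ∀ j, ∀ t ∈ Ico (0:ℝ) Th,
      xhdd j t + β • xhd j t
        = (2 / (q j t + q (j+1) t)) • ((J:ℝ) • (τ (j+1) t - τ j t))
          - ⟪xhd j t, θd j t⟫ • θ j t)
    (hinit : ∀ j, xhd j 0 = V₀ (j * ((1:ℝ)/J)) • rot (θ j 0)) :
    ∀ j, ∀ t ∈ Ico (0:ℝ) Th, ⟪xhd j t, θ j t⟫ = 0 :=
  semidiscrete_orthogonality_general J Th β V₀ xh xhd xhdd τ θ θd q hq hqpos hτ hθwell hθ hxhdd hθd
    hscheme hinit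
end
end
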